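/- For every n ≥ 1, the Salajan discriminator D_S(n) is not divisible by 3. -/

import Mathlib

/-
Powers of two separate the Salajan sequence: for even `k` one has
`4 (u (i + k) - u i) = 3 ^ i (3 ^ k - 1)` and, by lifting the exponent, `v₂ (3 ^ k - 1) = v₂ k + 2`,
so `2 ^ e ∤ u (i + k) - u i` when `0 < k < 2 ^ e`; for odd `k` the difference is odd. Hence
`D_S n ≤ 2 ^ ⌈log₂ n⌉ < 2 n`. On the other hand, if `m = 3 ^ a b` with `a ≥ 1` and `3 ∤ b`, there
is an even `k ≤ max b 2` with `4 b ∣ 3 ^ k - 1`, and then `u a ≡ u (a + k) [ZMOD m]`. So such an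
`m` separates `u 1, …, u n` only if `n < a + k`, which forces `2 n ≤ m + 1`: a multiple of `3`
below `2 ^ ⌈log₂ n⌉` is too small to separate them.
-/

/-- The Salajan sequence: `u j = (3^j - 5*(-1)^j)/4`. -/
def salajanU (j : ℕ) : ℤ := ((3 : ℤ) ^ j - 5 * (-1) ^ j) / 4

/-- The Salajan discriminator. -/
noncomputable def salajanD (n : ℕ) : ℕ :=
  sInf {m : ℕ | 0 < m ∧ ∀ i j : ℕ, 1 ≤ i → i < j → j ≤ n →
    ¬ (salajanU i ≡ salajanU j [ZMOD (m : ℤ)])}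

theorem two_pow_add_two_dvd_three_pow_sub_one_iff {k : ℕ} (hk₀ : k ≠ 0) (hk : Even k) (e : ℕ) :
    2 ^ (e + 2) ∣ 3 ^ k - 1 ↔ 2 ^ e ∣ k := by
  have hv : padicValNat 2 (3 ^ k - 1) = padicValNat 2 k + 2 := by
    have h := padicValNat.pow_two_sub_one (by norm_num : 1 < 3) (by decide) hk₀ hk
    have h4 : padicValNat 2 4 = 2 := padicValNat.prime_pow (p := 2) 2
    norm_num [h4] at h
    omega
  have hpos : 3 ^ k - 1 ≠ 0 := by
    have := Nat.one_lt_pow hk₀ (by norm_num : 1 < 3)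
    omega
  rw [padicValNat_dvd_iff_le hpos, padicValNat_dvd_iff_le hk₀, hv]
  omega

theorem exists_four_mul_dvd_three_pow_sub_one {b : ℕ} (hb : 0 < b) (hb3 : ¬ 3 ∣ b) :
    ∃ k, Even k ∧ 0 < k ∧ k ≤ max b 2 ∧ 4 * b ∣ 3 ^ k - 1 := by
  obtain ⟨β, r, hr, rfl⟩ := Nat.exists_eq_two_pow_mul_odd hb.ne'
  rcases (by omega : 2 ^ β * r = 1 ∨ 2 ≤ 2 ^ β * r) with hb1 | hb2
  · exact ⟨2, even_two, two_pos, le_max_right _ _, by rw [hb1]; norm_num⟩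
  have hr3 : Nat.Coprime 3 r :=
    (Nat.Prime.coprime_iff_not_dvd Nat.prime_three).mpr fun h => hb3 (h.mul_left _)
  have hk₀ : 0 < 2 ^ β * r.totient := Nat.mul_pos (by positivity) (Nat.totient_pos.mpr hr.pos)
  have hk : Even (2 ^ β * r.totient) := by
    rcases β with _ | β
    · exact (Nat.totient_even (by rcases hr with ⟨c, rfl⟩; omega)).mul_left _
    · exact (Nat.even_pow.mpr ⟨even_two, β.succ_ne_zero⟩).mul_right _
  refine ⟨2 ^ β * r.totient, hk, hk₀,
    le_max_of_le_left (Nat.mul_le_mul_left _ (Nat.totient_le r)), ?_⟩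
  rw [show 4 * (2 ^ β * r) = 2 ^ (β + 2) * r by ring]
  refine (Nat.Coprime.pow_left _ (Nat.coprime_two_left.mpr hr)).mul_dvd_of_dvd_of_dvd ?_ ?_
  · exact (two_pow_add_two_dvd_three_pow_sub_one_iff hk₀.ne' hk β).mpr (dvd_mul_right _ _)
  · have h := (Nat.ModEq.pow_totient hr3).pow (2 ^ β)
    rw [← pow_mul, one_pow, mul_comm] at h
    exact (Nat.modEq_iff_dvd' (Nat.one_le_pow _ _ (by norm_num))).mp h.symm

theorem Nat.two_pow_clog_two_lt_two_mul {n : ℕ} (hn : n ≠ 0) : 2 ^ Nat.clog 2 n < 2 * n := by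
  rcases h : Nat.clog 2 n with _ | e
  · omega
  · have := Nat.pow_lt_of_lt_clog (b := 2) (x := n) (y := e) (by omega)
    rw [pow_succ]
    omega

theorem four_mul_salajanU (j : ℕ) : 4 * salajanU j = 3 ^ j - 5 * (-1) ^ j := by
  refine Int.mul_ediv_cancel' ?_
  have h : (4 : ℤ) ∣ 3 ^ j - (-1) ^ j := by simpa using sub_dvd_pow_sub_pow (3 : ℤ) (-1) j
  rw [show (3 : ℤ) ^ j - 5 * (-1) ^ j = 3 ^ j - (-1) ^ j - 4 * (-1) ^ j by ring]
  exact h.sub (dvd_mul_right _ _)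

theorem salajanU_add_two (j : ℕ) :
    salajanU (j + 2) = 2 * salajanU (j + 1) + 3 * salajanU j := by
  refine mul_left_cancel₀ (four_ne_zero : (4 : ℤ) ≠ 0) ?_
  linear_combination four_mul_salajanU (j + 2) - 2 * four_mul_salajanU (j + 1)
    - 3 * four_mul_salajanU j

theorem even_salajanU_iff : ∀ j, Even (salajanU j) ↔ Odd j
  | 0 => by decide
  | 1 => by decide
  | j + 2 => by
    simp [salajanU_add_two, Int.even_add, Int.even_mul, parity_simps, even_salajanU_iff j,
      show ¬ Even (3 : ℤ) by decide]

theorem four_mul_salajanU_add_sub (i : ℕ) {k : ℕ} (hk : Even k) :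
    4 * (salajanU (i + k) - salajanU i) = 3 ^ i * (3 ^ k - 1) := by
  rw [mul_sub, four_mul_salajanU, four_mul_salajanU, pow_add, pow_add, hk.neg_one_pow]
  ring

theorem salajanU_modEq_add (i : ℕ) {k : ℕ} (hk : Even k) {b : ℤ} (h : 4 * b ∣ 3 ^ k - 1) :
    salajanU i ≡ salajanU (i + k) [ZMOD 3 ^ i * b] := by
  obtain ⟨c, hc⟩ := h
  refine Int.modEq_iff_dvd.mpr ⟨c, mul_left_cancel₀ (four_ne_zero : (4 : ℤ) ≠ 0) ?_⟩
  rw [four_mul_salajanU_add_sub i hk, hc]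
  ring

theorem not_two_pow_dvd_salajanU_add_sub (i : ℕ) {k e : ℕ} (hk₀ : 0 < k) (hke : k < 2 ^ e) :
    ¬ (2 : ℤ) ^ e ∣ salajanU (i + k) - salajanU i := by
  intro hdvd
  rcases Nat.even_or_odd k with hk | hk
  · have hprod : (2 : ℤ) ^ (e + 2) ∣ 3 ^ i * (3 ^ k - 1) := by
      rw [← four_mul_salajanU_add_sub i hk, pow_add, mul_comm]
      exact mul_dvd_mul_left _ hdvd
    have hpowZ : (2 : ℤ) ^ (e + 2) ∣ 3 ^ k - 1 :=
      (IsCoprime.pow (by norm_num : IsCoprime (2 : ℤ) 3)).dvd_of_dvd_mul_left hprod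
    have hpow : 2 ^ (e + 2) ∣ 3 ^ k - 1 := by
      rw [← Int.natCast_dvd_natCast]
      simpa [Nat.one_le_pow] using hpowZ
    have := Nat.le_of_dvd hk₀ ((two_pow_add_two_dvd_three_pow_sub_one_iff hk₀.ne' hk e).mp hpow)
    omega
  · have he : e ≠ 0 := by rintro rfl; omega
    have h := even_iff_two_dvd.mpr ((dvd_pow_self 2 he).trans hdvd)
    rw [Int.even_sub, even_salajanU_iff, even_salajanU_iff, Nat.odd_add] at h
    rw [← Nat.not_even_iff_odd] at hk
    tauto

def SalajanSeparates (n m : ℕ) : Prop :=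
  ∀ i j : ℕ, 1 ≤ i → i < j → j ≤ n → ¬ (salajanU i ≡ salajanU j [ZMOD (m : ℤ)])

theorem salajanSeparates_two_pow {n e : ℕ} (h : n ≤ 2 ^ e) : SalajanSeparates n (2 ^ e) := by
  intro i j hi hij hjn hmod
  obtain ⟨k, hk, rfl⟩ : ∃ k, 0 < k ∧ j = i + k := ⟨j - i, by omega, by omega⟩
  exact not_two_pow_dvd_salajanU_add_sub i (e := e) hk (by omega) (by exact_mod_cast hmod.dvd)

theorem salajanD_spec (n : ℕ) : 0 < salajanD n ∧ SalajanSeparates n (salajanD n) :=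
  Nat.sInf_mem (s := {m | 0 < m ∧ SalajanSeparates n m})
    ⟨_, by positivity, salajanSeparates_two_pow (Nat.le_pow_clog one_lt_two n)⟩

theorem salajanD_le {n m : ℕ} (hm : 0 < m) (h : SalajanSeparates n m) : salajanD n ≤ m :=
  Nat.sInf_le ⟨hm, h⟩

theorem SalajanSeparates.two_mul_le_add_one {n m : ℕ} (h : SalajanSeparates n m) (hm : 0 < m)
    (h3 : 3 ∣ m) : 2 * n ≤ m + 1 := by
  obtain ⟨a, b, hb3, rfl⟩ := Nat.exists_eq_pow_mul_and_not_dvd hm.ne' 3 (by norm_num)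
  have ha : a ≠ 0 := by rintro rfl; simp_all
  have hb : 0 < b := Nat.pos_of_mul_pos_left hm
  obtain ⟨k, hk, hk₀, hkb, hdvd⟩ := exists_four_mul_dvd_three_pow_sub_one hb hb3
  have hn : n < a + k := by
    by_contra! hle
    refine h a (a + k) (by omega) (by omega) hle ?_
    have h4 : 4 * (b : ℤ) ∣ 3 ^ k - 1 := by
      simpa [Nat.one_le_pow] using Int.natCast_dvd_natCast.mpr hdvd
    simpa using salajanU_modEq_add a hk h4
  have h3a : 2 * a + 1 ≤ 3 ^ a := by
    have := one_add_mul_le_pow (by norm_num : (-2 : ℤ) ≤ 2) a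
    norm_num at this
    exact_mod_cast (by linarith : (2 * a + 1 : ℤ) ≤ 3 ^ a)
  rcases le_or_gt b 2 with hb2 | hb2
  · have := Nat.le_mul_of_pos_right (3 ^ a) hb
    omega
  · have := Nat.mul_le_mul_right b h3a
    have hkb : k ≤ b := max_eq_left hb2.le ▸ hkb
    nlinarith [Nat.one_le_iff_ne_zero.mpr ha]

theorem salajanD_not_div_three (n : ℕ) (hn : 1 ≤ n) : ¬ 3 ∣ salajanD n := by
  intro h3
  obtain ⟨hpos, hsep⟩ := salajanD_spec n
  have hle : salajanD n ≤ 2 ^ Nat.clog 2 n :=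
    salajanD_le (by positivity) (salajanSeparates_two_pow (Nat.le_pow_clog one_lt_two n))
  have hne : salajanD n ≠ 2 ^ Nat.clog 2 n := by
    rintro h
    rw [h] at h3
    exact absurd (Nat.prime_three.dvd_of_dvd_pow h3) (by norm_num)
  have hlow := hsep.two_mul_le_add_one hpos h3
  have hup := Nat.two_pow_clog_two_lt_two_mul (by omega : n ≠ 0)
  omega
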